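/- arXiv:2311.13644 — 2 statements merged into one kernel-verified Lean document; each statement's English description precedes it below -/
import Mathlib

section
/- An ideal (projective, Lüders-rule) nonselective measurement in the twisted basis {|00⟩, |01⟩, |1+⟩, |1-⟩} allows signaling: starting from |00⟩, if Alice applies σ_x to the first qubit before the twisted measurement, then Bob's subsequent Z-measurement statistics on the second qubit differ from the case where Alice does nothing. Specifically, with no kick, Bob obtains outcome 0 with probability 1; with the kick σ_x ⊗ I, Bob obtains outcome 0 with probability 1/2. -/
open Matrix
open scoped Kronecker BigOperators ComplexOrder

noncomputable section

/-- Hermitian inner product (conjugate-linear in the first argument). -/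
def dot {I : Type*} [Fintype I] (v w : I → ℂ) : ℂ := ∑ i, star (v i) * w i

/-- Outer product |v⟩⟨v|. -/
def outer {I : Type*} (v : I → ℂ) : Matrix I I ℂ := fun i j => v i * star (v j)

def ket0 : Fin 2 → ℂ := fun i => if i = 0 then 1 else 0
def ket1 : Fin 2 → ℂ := fun i => if i = 1 then 1 else 0

/-- 1/√2 as a complex number. -/
def isq2 : ℂ := ((Real.sqrt 2)⁻¹ : ℝ)

def ketP : Fin 2 → ℂ := fun _ => isq2
def ketM : Fin 2 → ℂ := fun i => if i = 0 then isq2 else -isq2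

/-- Tensor product of two qubit state vectors. -/
def tp (v w : Fin 2 → ℂ) : Fin 2 × Fin 2 → ℂ := fun p => v p.1 * w p.2

/-- Partial trace over the first (Alice's) qubit; result acts on Bob's qubit. -/
def ptrA (ρ : Matrix (Fin 2 × Fin 2) (Fin 2 × Fin 2) ℂ) : Matrix (Fin 2) (Fin 2) ℂ :=
  fun b b' => ∑ a, ρ (a, b) (a, b')

/-- Partial trace over the second (Bob's) qubit; result acts on Alice's qubit. -/
def ptrB (ρ : Matrix (Fin 2 × Fin 2) (Fin 2 × Fin 2) ℂ) : Matrix (Fin 2) (Fin 2) ℂ :=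
  fun a a' => ∑ b, ρ (a, b) (a', b)

/-- Nonselective ideal (Lüders) measurement channel in the orthonormal basis `e`. -/
def measChan (e : Fin 4 → (Fin 2 × Fin 2 → ℂ))
    (ρ : Matrix (Fin 2 × Fin 2) (Fin 2 × Fin 2) ℂ) : Matrix (Fin 2 × Fin 2) (Fin 2 × Fin 2) ℂ :=
  ∑ i, outer (e i) * ρ * outer (e i)

/-- Pauli matrices. -/
def sx : Matrix (Fin 2) (Fin 2) ℂ := !![0, 1; 1, 0]
def sy : Matrix (Fin 2) (Fin 2) ℂ := !![0, -Complex.I; Complex.I, 0]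
def sz : Matrix (Fin 2) (Fin 2) ℂ := !![1, 0; 0, -1]

def pauli : Fin 4 → Matrix (Fin 2) (Fin 2) ℂ := ![1, sx, sy, sz]

/-- The Bell state Φ⁺ = (|00⟩+|11⟩)/√2. -/
def phiP : Fin 2 × Fin 2 → ℂ := fun p => if p.1 = p.2 then isq2 else 0

/-- Bell basis parametrized by Pauli operators: `bellP k = (I ⊗ σ_k) Φ⁺`. -/
def bellP (k : Fin 4) : Fin 2 × Fin 2 → ℂ := fun p => isq2 * pauli k p.2 p.1

/-- Explicit Bell basis in the order Φ⁺, Ψ⁺, Ψ⁻, Φ⁻. -/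
def bPhiP : Fin 2 × Fin 2 → ℂ := fun p => if p.1 = p.2 then isq2 else 0
def bPhiM : Fin 2 × Fin 2 → ℂ := fun p => if p.1 = p.2 then (if p.1 = 0 then isq2 else -isq2) else 0
def bPsiP : Fin 2 × Fin 2 → ℂ := fun p => if p.1 = p.2 then 0 else isq2
def bPsiM : Fin 2 × Fin 2 → ℂ := fun p => if p.1 = p.2 then 0 else (if p.1 = 0 then isq2 else -isq2)

def bellE : Fin 4 → (Fin 2 × Fin 2 → ℂ) := ![bPhiP, bPsiP, bPsiM, bPhiM]

/-- The twisted basis {|00⟩, |01⟩, |1+⟩, |1-⟩}. -/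
def twisted : Fin 4 → (Fin 2 × Fin 2 → ℂ) := ![tp ket0 ket0, tp ket0 ket1, tp ket1 ketP, tp ket1 ketM]

/-!
A Lüders measurement of a pure state `ψ` in an orthonormal basis `e` produces the mixture
`∑ i, |⟨e i|ψ⟩|² |e i⟩⟨e i|`. Without the kick, `|00⟩` is itself a twisted basis vector and is left
unchanged, so Bob sees `0` with certainty. The kick turns `|00⟩` into `|10⟩`, which the twisted basis
splits evenly between `|1+⟩` and `|1-⟩`; in both, Bob's qubit gives `0` with probability `1/2`.
-/

section Outer

variable {I : Type*} [Fintype I]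

lemma star_dot (v w : I → ℂ) : star (dot v w) = dot w v := by
  simp [dot, star_sum, mul_comm]

lemma outer_mul_mul_outer (v : I → ℂ) (M : Matrix I I ℂ) :
    outer v * M * outer v = dot v (M *ᵥ v) • outer v := by
  ext i j
  simp only [outer, dot, mul_apply, mulVec, dotProduct, Matrix.smul_apply, smul_eq_mul,
    Finset.sum_mul, Finset.mul_sum]
  rw [Finset.sum_comm]
  refine Finset.sum_congr rfl fun k _ => Finset.sum_congr rfl fun l _ => ?_
  ring

lemma dot_outer_mulVec (v ψ : I → ℂ) :
    dot v (outer ψ *ᵥ v) = Complex.normSq (dot v ψ) := by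
  rw [← Complex.mul_conj, ← Complex.star_def, star_dot]
  simp only [dot, outer, mulVec, dotProduct]
  rw [Finset.sum_mul_sum]
  simp only [Finset.mul_sum]
  refine Finset.sum_congr rfl fun k _ => Finset.sum_congr rfl fun l _ => ?_
  ring

lemma mul_outer_mul_conjTranspose (A : Matrix I I ℂ) (ψ : I → ℂ) :
    A * outer ψ * Aᴴ = outer (A *ᵥ ψ) := by
  ext i j
  simp only [outer, mul_apply, conjTranspose_apply, mulVec, dotProduct, star_sum, star_mul',
    Finset.sum_mul, Finset.mul_sum]
  refine Finset.sum_congr rfl fun k _ => Finset.sum_congr rfl fun l _ => ?_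
  ring

end Outer

lemma measChan_outer (e : Fin 4 → (Fin 2 × Fin 2 → ℂ)) (ψ : Fin 2 × Fin 2 → ℂ) :
    measChan e (outer ψ) = ∑ i, (Complex.normSq (dot (e i) ψ) : ℂ) • outer (e i) := by
  simp only [measChan, outer_mul_mul_outer, dot_outer_mulVec]

lemma dot_tp (a b c d : Fin 2 → ℂ) : dot (tp a b) (tp c d) = dot a c * dot b d := by
  simp only [dot, tp, Fintype.sum_prod_type, Finset.sum_mul_sum, star_mul']
  refine Finset.sum_congr rfl fun k _ => Finset.sum_congr rfl fun l _ => ?_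
  ring

lemma kronecker_mulVec_tp (A B : Matrix (Fin 2) (Fin 2) ℂ) (v w : Fin 2 → ℂ) :
    (A ⊗ₖ B) *ᵥ tp v w = tp (A *ᵥ v) (B *ᵥ w) := by
  ext ⟨i, j⟩
  simp only [tp, mulVec, dotProduct, kroneckerMap_apply, Fintype.sum_prod_type,
    Finset.sum_mul_sum]
  refine Finset.sum_congr rfl fun k _ => Finset.sum_congr rfl fun l _ => ?_
  ring

lemma ptrA_sum_smul {ι : Type*} (s : Finset ι) (c : ι → ℂ)
    (M : ι → Matrix (Fin 2 × Fin 2) (Fin 2 × Fin 2) ℂ) :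
    ptrA (∑ i ∈ s, c i • M i) = ∑ i ∈ s, c i • ptrA (M i) := by
  ext b b'
  simp only [ptrA, Matrix.sum_apply, Matrix.smul_apply, smul_eq_mul, Finset.mul_sum]
  exact Finset.sum_comm

lemma ptrA_outer_tp (v w : Fin 2 → ℂ) : ptrA (outer (tp v w)) = dot v v • outer w := by
  ext b b'
  simp only [ptrA, outer, tp, dot, Matrix.smul_apply, smul_eq_mul, star_mul', Finset.sum_mul]
  refine Finset.sum_congr rfl fun a _ => ?_
  ring

lemma ptrA_measChan_outer_of_tp (a b : Fin 4 → Fin 2 → ℂ) (ψ : Fin 2 × Fin 2 → ℂ) :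
    ptrA (measChan (fun i => tp (a i) (b i)) (outer ψ)) =
      ∑ i, ((Complex.normSq (dot (tp (a i) (b i)) ψ) : ℂ) * dot (a i) (a i)) • outer (b i) := by
  simp only [measChan_outer, ptrA_sum_smul, ptrA_outer_tp, smul_smul]

lemma twisted_eq_tp :
    twisted = fun i => tp (![ket0, ket0, ket1, ket1] i) (![ket0, ket1, ketP, ketM] i) := by
  funext i
  fin_cases i <;> rfl

lemma isq2_mul_isq2 : isq2 * isq2 = 1 / 2 := by
  rw [isq2, ← Complex.ofReal_mul, ← mul_inv, Real.mul_self_sqrt zero_le_two]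
  norm_num

lemma star_isq2 : star isq2 = isq2 := Complex.conj_ofReal _

lemma normSq_isq2 : Complex.normSq isq2 = 1 / 2 := by
  rw [← Complex.ofReal_inj, ← Complex.mul_conj, ← Complex.star_def, star_isq2, isq2_mul_isq2]
  norm_num

lemma sx_mulVec_ket0 : sx *ᵥ ket0 = ket1 := by
  ext i
  fin_cases i <;> simp [sx, ket0, ket1, mulVec, dotProduct]

lemma ptrA_measChan_twisted_ket00 : ptrA (measChan twisted (outer (tp ket0 ket0))) 0 0 = 1 := by
  rw [twisted_eq_tp, ptrA_measChan_outer_of_tp]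
  simp only [Fin.sum_univ_four, dot_tp, Matrix.cons_val]
  simp [dot, outer, ket0, ket1, ketP, ketM]

lemma ptrA_measChan_twisted_ket10 :
    ptrA (measChan twisted (outer (tp ket1 ket0))) 0 0 = 1 / 2 := by
  rw [twisted_eq_tp, ptrA_measChan_outer_of_tp]
  simp only [Fin.sum_univ_four, dot_tp, Matrix.cons_val]
  norm_num [dot, outer, ket0, ket1, ketP, ketM, star_isq2, normSq_isq2, isq2_mul_isq2]

/-- the nonselective ideal measurement in the twisted basis allows signaling:
starting from |00⟩, without Alice's kick Bob's Z-outcome 0 has probability 1; with the kick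
σ_x ⊗ I it has probability 1/2, so Bob's marginal changes. -/
theorem twisted_ideal_measurement_signals :
    ptrA (measChan twisted (outer (tp ket0 ket0))) 0 0 = 1 ∧
    ptrA (measChan twisted
      ((sx ⊗ₖ (1 : Matrix (Fin 2) (Fin 2) ℂ)) * outer (tp ket0 ket0) *
        (sx ⊗ₖ (1 : Matrix (Fin 2) (Fin 2) ℂ))ᴴ)) 0 0 = 1 / 2 ∧
    ptrA (measChan twisted
      ((sx ⊗ₖ (1 : Matrix (Fin 2) (Fin 2) ℂ)) * outer (tp ket0 ket0) *
        (sx ⊗ₖ (1 : Matrix (Fin 2) (Fin 2) ℂ))ᴴ)) ≠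
      ptrA (measChan twisted (outer (tp ket0 ket0))) := by
  have hkick : (sx ⊗ₖ (1 : Matrix (Fin 2) (Fin 2) ℂ)) * outer (tp ket0 ket0) *
      (sx ⊗ₖ (1 : Matrix (Fin 2) (Fin 2) ℂ))ᴴ = outer (tp ket1 ket0) := by
    rw [mul_outer_mul_conjTranspose, kronecker_mulVec_tp, sx_mulVec_ket0, one_mulVec]
  rw [hkick]
  refine ⟨ptrA_measChan_twisted_ket00, ptrA_measChan_twisted_ket10, fun h => ?_⟩
  have h00 := congrFun (congrFun h 0) 0
  rw [ptrA_measChan_twisted_ket00, ptrA_measChan_twisted_ket10] at h00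
  norm_num at h00
end
end

section
/- Summing the joint probabilities of the localized Bell measurement over all (a,b) pairs yielding the same effective outcome c recovers the Born probability of the nonlocal BSM: Σ_{(a,b): σ_aσ_b ∝ σ_c} |(⟨B_a|₁₂⊗⟨B_b|₃₄)(|ψ⟩₁₄⊗|Φ⁺⟩₂₃)|² = |⟨B_c|ψ⟩|² for every two-qubit state |ψ⟩ and every c ∈ {0,1,2,3}. -/
/-!
Entanglement swapping turns the localized amplitude for outcomes `(a, b)` into `½ · w · ⟨B_c|ψ⟩`
with `σ_b σ_a = w σ_c` and `|w| = 1`. Pauli indices multiply as the Klein four-group, i.e. by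
bitwise xor on `Fin 4`, so for each `a` exactly one `b` leads to `c`, and the four terms
`¼ |⟨B_c|ψ⟩|²` add up to the Born probability.
-/

open Matrix
open scoped Kronecker BigOperators ComplexOrder

noncomputable section

/-- Amplitude that Alice's Bell measurement on qubits (1,2) yields outcome a and Bob's
Bell measurement on (3,4) yields outcome b, when qubits (1,4) are in the state ψ and
qubits (2,3) are in Φ⁺. -/
def bsmLocAmp (ψ : Fin 2 × Fin 2 → ℂ) (a b : Fin 4) : ℂ :=
  ∑ q1 : Fin 2, ∑ q2 : Fin 2, ∑ q3 : Fin 2, ∑ q4 : Fin 2,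
    star (bellP a (q1, q2)) * star (bellP b (q3, q4)) * (ψ (q1, q4) * phiP (q2, q3))

lemma isq2_sq : isq2 ^ 2 = 2⁻¹ := by
  simp [isq2, ← Complex.ofReal_pow, inv_pow]

/-- The vector `(I ⊗ M) Φ⁺`. -/
def bellVec (M : Matrix (Fin 2) (Fin 2) ℂ) : Fin 2 × Fin 2 → ℂ := fun p => isq2 * M p.2 p.1

lemma bellP_eq_bellVec (k : Fin 4) : bellP k = bellVec (pauli k) := rfl

lemma dot_bellVec_smul (w : ℂ) (M : Matrix (Fin 2) (Fin 2) ℂ) (ψ : Fin 2 × Fin 2 → ℂ) :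
    dot (bellVec (w • M)) ψ = star w * dot (bellVec M) ψ := by
  simp only [dot, bellVec, Matrix.smul_apply, smul_eq_mul, star_mul, Finset.mul_sum]
  exact Finset.sum_congr rfl fun _ _ => by ring

/-- Entanglement swapping: projecting qubits (1,2) and (3,4) of `ψ₁₄ ⊗ Φ⁺₂₃` onto
`(I ⊗ A) Φ⁺` and `(I ⊗ B) Φ⁺` projects `ψ` onto `(I ⊗ B A) Φ⁺`. -/
lemma sum_bellVec_swap (A B : Matrix (Fin 2) (Fin 2) ℂ) (ψ : Fin 2 × Fin 2 → ℂ) :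
    ∑ q1 : Fin 2, ∑ q2 : Fin 2, ∑ q3 : Fin 2, ∑ q4 : Fin 2,
      star (bellVec A (q1, q2)) * star (bellVec B (q3, q4)) * (ψ (q1, q4) * phiP (q2, q3)) =
    isq2 ^ 2 * dot (bellVec (B * A)) ψ := by
  simp only [dot, bellVec, phiP, Matrix.mul_apply, Fin.sum_univ_two, Fintype.sum_prod_type,
    star_mul, star_add, star_isq2]
  simp only [RCLike.star_def, ↓reduceIte, zero_ne_one, one_ne_zero, mul_zero, add_zero, zero_add]
  ring

lemma bsmLocAmp_eq (ψ : Fin 2 × Fin 2 → ℂ) (a b : Fin 4) :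
    bsmLocAmp ψ a b = isq2 ^ 2 * dot (bellVec (pauli b * pauli a)) ψ :=
  sum_bellVec_swap (pauli a) (pauli b) ψ

lemma pauli_mul_pauli (a b : Fin 4) :
    ∃ w : ℂ, ‖w‖ = 1 ∧ pauli a * pauli b = w • pauli (a ^^^ b) := by
  suffices ∃ w ∈ ({1, Complex.I, -Complex.I} : Set ℂ), pauli a * pauli b = w • pauli (a ^^^ b) by
    obtain ⟨w, hw, h⟩ := this
    exact ⟨w, by rcases hw with rfl | rfl | rfl <;> simp, h⟩
  fin_cases a <;> fin_cases b <;>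
    simp [pauli, sx, sy, sz, ← Matrix.ext_iff, Fin.forall_fin_two, or_and_right, exists_or]

lemma xor_xor_cancel_left_fin_four (x y : Fin 4) : x ^^^ (x ^^^ y) = y := by
  rw [← Fin.xor_assoc (n := 2) rfl, Fin.xor_self, Fin.xor_comm, Fin.xor_zero]

lemma trace_pauli_mul_pauli (c d : Fin 4) :
    (pauli c * pauli d).trace = if c = d then 2 else 0 := by
  fin_cases c <;> fin_cases d <;>
    simp [pauli, sx, sy, sz, Matrix.trace_fin_two] <;> norm_num

lemma eq_of_smul_pauli_eq_smul_pauli {z w : ℂ} {c d : Fin 4} (hz : z ≠ 0)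
    (h : z • pauli c = w • pauli d) : c = d := by
  by_contra hcd
  have := congrArg (fun M => (M * pauli c).trace) h
  exact hz (by simpa [Matrix.trace_smul, trace_pauli_mul_pauli, Ne.symm hcd] using this)

lemma exists_pauli_mul_pauli_eq_smul_iff (a b c : Fin 4) :
    (∃ z : ℂ, z ≠ 0 ∧ pauli a * pauli b = z • pauli c) ↔ b = a ^^^ c := by
  obtain ⟨w, hw, hab⟩ := pauli_mul_pauli a b
  constructor
  · rintro ⟨z, hz, h⟩
    rw [eq_of_smul_pauli_eq_smul_pauli hz (h.symm.trans hab), xor_xor_cancel_left_fin_four]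
  · rintro rfl
    rw [xor_xor_cancel_left_fin_four] at hab
    exact ⟨w, norm_ne_zero_iff.mp (hw ▸ one_ne_zero), hab⟩

lemma norm_bsmLocAmp_xor_sq (ψ : Fin 2 × Fin 2 → ℂ) (a c : Fin 4) :
    ‖bsmLocAmp ψ a (a ^^^ c)‖ ^ 2 = 4⁻¹ * ‖dot (bellP c) ψ‖ ^ 2 := by
  obtain ⟨w, hw, h⟩ := pauli_mul_pauli (a ^^^ c) a
  rw [Fin.xor_comm _ a, xor_xor_cancel_left_fin_four] at h
  rw [bsmLocAmp_eq, h, dot_bellVec_smul, isq2_sq, bellP_eq_bellVec]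
  simp only [norm_mul, norm_star, hw, norm_inv, Complex.norm_ofNat]
  ring

open Classical in
theorem bsm_localization_sum_recovers_born_general (ψ : Fin 2 × Fin 2 → ℂ)
    (c : Fin 4) :
    (∑ a : Fin 4, ∑ b : Fin 4,
        if ∃ z : ℂ, z ≠ 0 ∧ pauli a * pauli b = z • pauli c
        then ‖bsmLocAmp ψ a b‖ ^ 2 else 0) = ‖dot (bellP c) ψ‖ ^ 2 := by
  simp only [exists_pauli_mul_pauli_eq_smul_iff, Finset.sum_ite_eq', Finset.mem_univ, if_true,
    norm_bsmLocAmp_xor_sq, Finset.sum_const, Finset.card_univ, Fintype.card_fin, nsmul_eq_mul]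
  ring

open Classical in
/-- summing the joint probabilities of the localized Bell measurement over
all pairs (a,b) with σ_a σ_b ∝ σ_c recovers the Born probability of the nonlocal BSM. -/
theorem bsm_localization_sum_recovers_born (ψ : Fin 2 × Fin 2 → ℂ) (hψ : dot ψ ψ = 1)
    (c : Fin 4) :
    (∑ a : Fin 4, ∑ b : Fin 4,
        if ∃ z : ℂ, z ≠ 0 ∧ pauli a * pauli b = z • pauli c
        then ‖bsmLocAmp ψ a b‖ ^ 2 else 0) = ‖dot (bellP c) ψ‖ ^ 2 :=
  bsm_localization_sum_recovers_born_general ψ c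
end
end
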